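/- arXiv:2510.22311 — 5 statements merged into one kernel-verified Lean document; each statement's English description precedes it below -/
import Mathlib

section
/- Let 0 < α < 1/2, let I and J be finite nonempty types, let λ : J → ℝ be nonnegative weights with Σ_{j∈J} λ j = 1, and for each j let c_j : I → ℝ be a nonnegative family with Σ_{i∈I} ((c_j i)²)^α > 0. Define the mixture m : I → ℝ by m i = Σ_{j∈J} λ j · c_j i. Then S^α(m) ≥ Σ_{j∈J} λ j · S^α(c_j), i.e. the OSE is concave for 0 < α < 1/2. -/
/-!
For `0 ≤ α ≤ 1/2` the map `t ↦ (t²)^α = t^(2α)` is concave on `t ≥ 0`, so `c ↦ ∑ i, ((c i)²)^α` is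
concave on nonnegative families. Composing with the concave increasing `log` and multiplying by
`1 / (1 - α) > 0` keeps concavity, and the theorem is Jensen's inequality for the resulting
concave function `OSE α`.
-/

/-- Operator Stabilizer Rényi entropy of a family of real Pauli coefficients. -/
noncomputable def OSE {I : Type*} [Fintype I] (α : ℝ) (c : I → ℝ) : ℝ :=
  (1 / (1 - α)) * Real.log (∑ i, ((c i) ^ 2) ^ α)

open Finset Real

lemma Real.sq_rpow_of_nonneg {x : ℝ} (hx : 0 ≤ x) (α : ℝ) : (x ^ 2) ^ α = x ^ (2 * α) := by
  rw [← rpow_natCast x 2, ← rpow_mul hx]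
  norm_num

section

variable {I : Type*} [Fintype I] {α : ℝ}

lemma concaveOn_sum_sq_rpow (hα0 : 0 ≤ α) (hα : α ≤ 1 / 2) :
    ConcaveOn ℝ (Set.Ici 0) (fun c : I → ℝ => ∑ i, (c i ^ 2) ^ α) := by
  have hrpow := concaveOn_rpow (p := 2 * α) (by linarith) (by linarith)
  refine ⟨convex_Ici 0, fun x hx y hy a b ha hb hab => ?_⟩
  simp only [smul_eq_mul, mul_sum, ← sum_add_distrib, Pi.add_apply, Pi.smul_apply]
  refine sum_le_sum fun i _ => ?_
  have hxi : 0 ≤ x i := hx i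
  have hyi : 0 ≤ y i := hy i
  have hmix : 0 ≤ a * x i + b * y i := by positivity
  rw [sq_rpow_of_nonneg hxi, sq_rpow_of_nonneg hyi, sq_rpow_of_nonneg hmix]
  exact hrpow.2 hxi hyi ha hb hab

lemma concaveOn_OSE (hα0 : 0 ≤ α) (hα : α ≤ 1 / 2) :
    ConcaveOn ℝ {c : I → ℝ | c ∈ Set.Ici 0 ∧ 0 < ∑ i, (c i ^ 2) ^ α} (OSE α) := by
  have hF := concaveOn_sum_sq_rpow (I := I) hα0 hα
  refine ⟨hF.convex_gt 0, fun x hx y hy a b ha hb hab => ?_⟩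
  set F : (I → ℝ) → ℝ := fun c => ∑ i, (c i ^ 2) ^ α
  have hlog : a * log (F x) + b * log (F y) ≤ log (F (a • x + b • y)) :=
    (strictConcaveOn_log_Ioi.concaveOn.2 hx.2 hy.2 ha hb hab).trans
      (log_le_log ((convex_Ioi (0 : ℝ)) hx.2 hy.2 ha hb hab) (hF.2 hx.1 hy.1 ha hb hab))
  have hcoef : 0 ≤ 1 / (1 - α) := by
    have : 0 < 1 - α := by linarith
    positivity
  calc a • OSE α x + b • OSE α y = 1 / (1 - α) * (a * log (F x) + b * log (F y)) := by
        simp only [OSE, smul_eq_mul, F]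
        ring
    _ ≤ OSE α (a • x + b • y) := mul_le_mul_of_nonneg_left hlog hcoef

end

theorem OSE_concave_general {I J : Type*} [Fintype I] [Fintype J]
    (α : ℝ) (hα0 : 0 < α) (hα : α < 1 / 2)
    (lam : J → ℝ) (hlam : ∀ j, 0 ≤ lam j) (hsum : ∑ j, lam j = 1)
    (c : J → I → ℝ) (hc : ∀ j i, 0 ≤ c j i)
    (hpos : ∀ j, 0 < ∑ i, ((c j i) ^ 2) ^ α) :
    ∑ j, lam j * OSE α (c j) ≤ OSE α (fun i => ∑ j, lam j * c j i) := by
  have hjensen := (concaveOn_OSE hα0.le hα.le).le_map_sum (t := univ) (fun j _ => hlam j) hsum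
    (fun j _ => ⟨fun i => hc j i, hpos j⟩)
  have hmix : ∑ j, lam j • c j = fun i => ∑ j, lam j * c j i := by
    ext i
    simp only [Finset.sum_apply, Pi.smul_apply, smul_eq_mul]
  simpa only [smul_eq_mul, hmix] using hjensen

/-- Concavity of the OSE for `0 < α < 1/2`. -/
theorem OSE_concave {I J : Type*} [Fintype I] [Fintype J] [Nonempty I] [Nonempty J]
    (α : ℝ) (hα0 : 0 < α) (hα : α < 1 / 2)
    (lam : J → ℝ) (hlam : ∀ j, 0 ≤ lam j) (hsum : ∑ j, lam j = 1)
    (c : J → I → ℝ) (hc : ∀ j i, 0 ≤ c j i)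
    (hpos : ∀ j, 0 < ∑ i, ((c j i) ^ 2) ^ α) :
    ∑ j, lam j * OSE α (c j) ≤ OSE α (fun i => ∑ j, lam j * c j i) :=
  OSE_concave_general α hα0 hα lam hlam hsum c hc hpos
end

section
/- Let 1/2 ≤ α < 1, let I and J be finite types, let λ : J → ℝ be nonnegative weights with Σ_{j∈J} λ j = 1, and for each j let c_j : I → ℝ. Then (Σ_{i∈I} |Σ_{j∈J} λ j · c_j i|^{2α})^{1/(1−α)} ≤ Σ_{j∈J} λ j · (Σ_{i∈I} |c_j i|^{2α})^{1/(1−α)}. Equivalently, exp(S^α(·)) is a convex function of the coefficient family for 1/2 ≤ α < 1. -/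
open Set

theorem ConvexOn.rpow {E : Type*} [AddCommMonoid E] [Module ℝ E] {s : Set E} {f : E → ℝ}
    (hf : ConvexOn ℝ s f) (hf₀ : ∀ x ∈ s, 0 ≤ f x) {q : ℝ} (hq : 1 ≤ q) :
    ConvexOn ℝ s fun x => f x ^ q := by
  refine ⟨hf.1, fun x hx y hy a b ha hb hab => ?_⟩
  simp only [smul_eq_mul]
  calc f (a • x + b • y) ^ q ≤ (a * f x + b * f y) ^ q :=
        Real.rpow_le_rpow (hf₀ _ (hf.1 hx hy ha hb hab)) (hf.2 hx hy ha hb hab) (by linarith)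
    _ ≤ a * f x ^ q + b * f y ^ q :=
        (convexOn_rpow hq).2 (hf₀ x hx) (hf₀ y hy) ha hb hab

/-- `(∑ i, |x i| ^ p) ^ s` is `‖x‖ₚ ^ (p * s)`, a convex increasing function of the `ℓᵖ` norm. -/
theorem convexOn_sum_abs_rpow_rpow {I : Type*} [Fintype I] {p s : ℝ} (hp : 1 ≤ p)
    (hps : 1 ≤ p * s) : ConvexOn ℝ univ fun x : I → ℝ => (∑ i, |x i| ^ p) ^ s := by
  have hp_toReal : (ENNReal.ofReal p).toReal = p := ENNReal.toReal_ofReal (by linarith)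
  have : Fact (1 ≤ ENNReal.ofReal p) := ⟨ENNReal.one_le_ofReal.2 hp⟩
  have hnorm (x : I → ℝ) :
      ‖WithLp.toLp (ENNReal.ofReal p) x‖ ^ (p * s) = (∑ i, |x i| ^ p) ^ s := by
    rw [PiLp.norm_eq_sum (by linarith), hp_toReal,
      ← Real.rpow_mul (Finset.sum_nonneg fun i _ => by positivity), one_div,
      inv_mul_cancel_left₀ (by linarith)]
    simp only [Real.norm_eq_abs]
  have hconv := ((convexOn_norm convex_univ).rpow (fun _ _ => norm_nonneg _) hps).comp_linearMap
    (WithLp.linearEquiv (ENNReal.ofReal p) ℝ (I → ℝ)).symm.toLinearMap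
  simpa only [preimage_univ, Function.comp_def, LinearEquiv.coe_coe,
    WithLp.coe_symm_linearEquiv, hnorm] using hconv

/-- Convexity of `exp (Sᵅ (·))` for `1/2 ≤ α < 1`: the quantity
`(∑ i, |c i| ^ (2α)) ^ (1/(1-α)) = exp (Sᵅ c)` is convex in the coefficient family. -/
theorem exp_OSE_convex {I J : Type*} [Fintype I] [Fintype J]
    (α : ℝ) (hα0 : 1 / 2 ≤ α) (hα1 : α < 1)
    (lam : J → ℝ) (hlam : ∀ j, 0 ≤ lam j) (hsum : ∑ j, lam j = 1)
    (c : J → I → ℝ) :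
    (∑ i, |∑ j, lam j * c j i| ^ (2 * α)) ^ (1 / (1 - α)) ≤
      ∑ j, lam j * (∑ i, |c j i| ^ (2 * α)) ^ (1 / (1 - α)) := by
  have hconv := convexOn_sum_abs_rpow_rpow (I := I) (p := 2 * α) (s := 1 / (1 - α))
    (by linarith) (by rw [mul_one_div, le_div_iff₀ (by linarith)]; linarith)
  have hjensen := hconv.map_sum_le (t := Finset.univ) (w := lam) (p := c)
    (fun j _ => hlam j) hsum (fun j _ => mem_univ (c j))
  simpa only [Finset.sum_apply, Pi.smul_apply, smul_eq_mul] using hjensen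
end

section
/- Let E be a real inner product space, I a finite type, (e_i)_{i∈I} an orthonormal family in E, and c : I → ℝ. Set O = Σ_{i∈I} c_i • e_i. Let T ⊆ I be a subset with a := Σ_{i∈T} c_i² > 0, and define the rescaled truncation Ô = (‖O‖ / √a) • Σ_{i∈T} c_i • e_i. Then ‖O − Ô‖ ≤ √(2 · Σ_{i∉T} c_i²). In particular, when T consists of the K coefficients of largest magnitude, the truncation error is at most √(2·Δ(K)) where Δ(K) is the squared sum of the discarded (tail) coefficients. -/
/-!
Split `O = P + Q` with `P = ∑ i ∈ T, c i • e i` orthogonal to `Q`. Then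
`O - Ô = (1 - ‖O‖ / ‖P‖) • P + Q`, so `‖O - Ô‖² = (‖O‖ - ‖P‖)² + ‖Q‖²`, and
`(‖O‖ - ‖P‖)² ≤ ‖O‖² - ‖P‖² = ‖Q‖²` because `0 ≤ ‖P‖ ≤ ‖O‖`.
-/

open Finset RealInnerProductSpace

theorem Orthonormal.inner_sum_smul_eq_zero_of_disjoint {𝕜 E ι : Type*} [RCLike 𝕜]
    [NormedAddCommGroup E] [InnerProductSpace 𝕜 E] {v : ι → E} (hv : Orthonormal 𝕜 v)
    (l₁ l₂ : ι → 𝕜) {s t : Finset ι} (hst : Disjoint s t) :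
    inner 𝕜 (∑ i ∈ s, l₁ i • v i) (∑ j ∈ t, l₂ j • v j) = 0 := by
  simp_rw [sum_inner, inner_sum, inner_smul_left, inner_smul_right]
  refine sum_eq_zero fun i hi => sum_eq_zero fun j hj => ?_
  have hij : i ≠ j := fun hij => disjoint_left.mp hst hi (hij ▸ hj)
  rw [hv.inner_eq_zero hij, mul_zero, mul_zero]

theorem Orthonormal.norm_sum_smul_sq {E ι : Type*} [NormedAddCommGroup E]
    [InnerProductSpace ℝ E] {v : ι → E} (hv : Orthonormal ℝ v) (l : ι → ℝ) (s : Finset ι) :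
    ‖∑ i ∈ s, l i • v i‖ ^ 2 = ∑ i ∈ s, l i ^ 2 := by
  rw [← real_inner_self_eq_norm_sq, hv.inner_sum]
  simp [sq]

theorem norm_add_sub_smul_sq_le_of_inner_eq_zero {F : Type*} [NormedAddCommGroup F]
    [InnerProductSpace ℝ F] {x y : F} (h : ⟪x, y⟫ = 0) :
    ‖x + y - (‖x + y‖ / ‖x‖) • x‖ ^ 2 ≤ 2 * ‖y‖ ^ 2 := by
  set r := ‖x + y‖
  have hr : r ^ 2 = ‖x‖ ^ 2 + ‖y‖ ^ 2 := by rw [norm_add_sq_real, h]; ring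
  have hxr : ‖x‖ ≤ r := by nlinarith [norm_nonneg x, norm_nonneg (x + y), norm_nonneg y]
  have hsplit : x + y - (r / ‖x‖) • x = (1 - r / ‖x‖) • x + y := by module
  rw [hsplit, norm_add_sq_real, real_inner_smul_left, h, mul_zero, mul_zero, add_zero, norm_smul,
    mul_pow, Real.norm_eq_abs, sq_abs]
  rcases (norm_nonneg x).eq_or_lt with hx | hx
  · rw [← hx]; nlinarith [sq_nonneg ‖y‖]
  · have : (1 - r / ‖x‖) ^ 2 * ‖x‖ ^ 2 = (‖x‖ - r) ^ 2 := by field_simp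
    nlinarith [norm_nonneg x]

theorem truncation_error_bound_general {E : Type*} [NormedAddCommGroup E] [InnerProductSpace ℝ E]
    {I : Type*} [Fintype I] [DecidableEq I]
    (e : I → E) (he : Orthonormal ℝ e) (c : I → ℝ) (T : Finset I) :
    ‖(∑ i, c i • e i) -
        (‖∑ i, c i • e i‖ / Real.sqrt (∑ i ∈ T, (c i) ^ 2)) • ∑ i ∈ T, c i • e i‖ ≤
      Real.sqrt (2 * ∑ i ∈ Tᶜ, (c i) ^ 2) := by
  rw [← sum_add_sum_compl T, ← he.norm_sum_smul_sq, ← he.norm_sum_smul_sq,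
    Real.sqrt_sq (norm_nonneg _)]
  exact Real.le_sqrt_of_sq_le <| norm_add_sub_smul_sq_le_of_inner_eq_zero <|
    he.inner_sum_smul_eq_zero_of_disjoint c c disjoint_compl_right

/-- Top-`K` truncation error bound: if `O = ∑ i, c i • e i` in an orthonormal family and
`Ô` is the rescaled truncation onto a subset `T` of coefficients, then
`‖O - Ô‖ ≤ √(2 · Σ_{i ∉ T} (c i)²)`. -/
theorem truncation_error_bound {E : Type*} [NormedAddCommGroup E] [InnerProductSpace ℝ E]
    {I : Type*} [Fintype I] [DecidableEq I]
    (e : I → E) (he : Orthonormal ℝ e) (c : I → ℝ) (T : Finset I)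
    (ha : 0 < ∑ i ∈ T, (c i) ^ 2) :
    ‖(∑ i, c i • e i) -
        (‖∑ i, c i • e i‖ / Real.sqrt (∑ i ∈ T, (c i) ^ 2)) • ∑ i ∈ T, c i • e i‖ ≤
      Real.sqrt (2 * ∑ i ∈ Tᶜ, (c i) ^ 2) :=
  truncation_error_bound_general e he c T
end

section
/- Let 0 < α < 1 and let c : ℕ → ℝ be such that the squared sequence is nonincreasing ((c (i+1))² ≤ (c i)² for all i), Σ'_i ((c i)²)^α < ∞ (summable), and Σ'_i (c i)² < ∞ (summable). Then for every natural number K ≥ 1, the tail satisfies Σ'_{i : ℕ} (c (K + i))² ≤ (α/(1−α)) · K^{−(1−α)/α} · (Σ'_{i} ((c i)²)^α)^{1/α}. -/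
/-!
Since the squares are nonincreasing, `(j + 1) · (c j²)^α ≤ S := ∑ (c i²)^α`, i.e.
`c j² ≤ S^(1/α) (j + 1)^(-1/α)`. Summing this over `j ≥ K` and comparing the sum with
`∫_K^∞ t^(-1/α) dt = K^(-r) / r`, where `r = 1/α - 1 = (1 - α)/α`, gives the bound.
-/

open Real Finset

lemma sum_range_rpow_neg_le {x r : ℝ} (hx : 0 < x) (hr : 0 < r) (n : ℕ) :
    ∑ i ∈ range n, (x + ↑(i + 1)) ^ (-(r + 1)) ≤ x ^ (-r) / r := by
  have hanti : AntitoneOn (fun t : ℝ => t ^ (-(r + 1))) (Set.Icc x (x + n)) :=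
    (antitoneOn_rpow_Ioi_of_exponent_nonpos (by linarith)).mono
      fun t ht => lt_of_lt_of_le hx ht.1
  have hint : ∫ t in x..x + n, t ^ (-(r + 1)) = (x ^ (-r) - (x + n) ^ (-r)) / r := by
    rw [integral_rpow (Or.inr ⟨by linarith, ?_⟩)]
    · rw [show -(r + 1) + 1 = -r by ring, ← neg_div_neg_eq, neg_sub, neg_neg]
    · rw [Set.uIcc_of_le (by simp)]; exact fun h => hx.not_ge h.1
  calc ∑ i ∈ range n, (x + ↑(i + 1)) ^ (-(r + 1))
      ≤ ∫ t in x..x + n, t ^ (-(r + 1)) := hanti.sum_le_integral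
    _ ≤ x ^ (-r) / r := by
      rw [hint]
      gcongr
      exact sub_le_self _ (by positivity)

lemma Antitone.succ_mul_le_tsum {b : ℕ → ℝ} (hb : Antitone b) (hb0 : ∀ i, 0 ≤ b i)
    (hsum : Summable b) (j : ℕ) : ((j : ℝ) + 1) * b j ≤ ∑' i, b i :=
  calc ((j : ℝ) + 1) * b j = ∑ _ ∈ range (j + 1), b j := by simp
    _ ≤ ∑ i ∈ range (j + 1), b i :=
      sum_le_sum fun i hi => hb (Nat.lt_succ_iff.mp (mem_range.mp hi))
    _ ≤ ∑' i, b i := hsum.sum_le_tsum _ fun i _ => hb0 i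

lemma Antitone.le_tsum_rpow_mul_rpow_neg {a : ℕ → ℝ} (ha : Antitone a) (ha0 : ∀ i, 0 ≤ a i)
    {α : ℝ} (hα : 0 < α) (hsum : Summable fun i => a i ^ α) (j : ℕ) :
    a j ≤ (∑' i, a i ^ α) ^ (1 / α) * ((j : ℝ) + 1) ^ (-(1 / α)) := by
  have hj : (0 : ℝ) < j + 1 := by positivity
  have hbound : a j ^ α ≤ (∑' i, a i ^ α) / (j + 1) := by
    rw [le_div_iff₀' hj]
    exact Antitone.succ_mul_le_tsum (fun _ _ h => rpow_le_rpow (ha0 _) (ha h) hα.le)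
      (fun i => rpow_nonneg (ha0 i) _) hsum j
  calc a j = (a j ^ α) ^ (1 / α) := by
        rw [← rpow_mul (ha0 j), mul_one_div_cancel hα.ne', rpow_one]
    _ ≤ ((∑' i, a i ^ α) / (j + 1)) ^ (1 / α) := by gcongr; exact rpow_nonneg (ha0 j) _
    _ = _ := by
      rw [div_rpow (tsum_nonneg fun i => rpow_nonneg (ha0 i) _) hj.le, rpow_neg hj.le,
        div_eq_mul_inv]

theorem tail_le_entropy_bound_general (α : ℝ) (hα0 : 0 < α) (hα1 : α < 1)
    (c : ℕ → ℝ) (hmono : ∀ i, (c (i + 1)) ^ 2 ≤ (c i) ^ 2)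
    (hsumα : Summable fun i => ((c i) ^ 2) ^ α)
    (K : ℕ) (hK : 1 ≤ K) :
    (∑' i, (c (K + i)) ^ 2) ≤
      (α / (1 - α)) * (K : ℝ) ^ (-(1 - α) / α) * (∑' i, ((c i) ^ 2) ^ α) ^ (1 / α) := by
  have hpoint := Antitone.le_tsum_rpow_mul_rpow_neg (a := fun i => c i ^ 2)
    (antitone_nat_of_succ_le hmono) (fun i => sq_nonneg _) hα0 hsumα
  set S := ∑' i, ((c i) ^ 2) ^ α
  set r := (1 - α) / α
  have hr : 0 < r := div_pos (sub_pos.mpr hα1) hα0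
  have hr1 : r + 1 = 1 / α := by simp only [r]; field_simp; ring
  have hK0 : (0 : ℝ) < K := by exact_mod_cast hK
  calc ∑' i, c (K + i) ^ 2 ≤ S ^ (1 / α) * ((K : ℝ) ^ (-r) / r) := by
        refine Real.tsum_le_of_sum_range_le (fun _ => sq_nonneg _) fun n => ?_
        calc ∑ i ∈ range n, c (K + i) ^ 2
            ≤ ∑ i ∈ range n, S ^ (1 / α) * ((K : ℝ) + ↑(i + 1)) ^ (-(r + 1)) :=
              sum_le_sum fun i _ => by
                rw [hr1]; exact (hpoint (K + i)).trans_eq (by push_cast; ring_nf)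
          _ = S ^ (1 / α) * ∑ i ∈ range n, ((K : ℝ) + ↑(i + 1)) ^ (-(r + 1)) :=
              (mul_sum ..).symm
          _ ≤ S ^ (1 / α) * ((K : ℝ) ^ (-r) / r) :=
              mul_le_mul_of_nonneg_left (sum_range_rpow_neg_le hK0 hr n) (by positivity)
    _ = (α / (1 - α)) * (K : ℝ) ^ (-(1 - α) / α) * S ^ (1 / α) := by
      rw [neg_div, div_eq_mul_inv _ r, inv_div]; ring

/-- Tail bound for Top-`K` truncation:
`Δ(K) ≤ (α/(1-α)) · K^{-(1-α)/α} · (∑ ((c i)²)^α)^{1/α}`. -/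
theorem tail_le_entropy_bound (α : ℝ) (hα0 : 0 < α) (hα1 : α < 1)
    (c : ℕ → ℝ) (hmono : ∀ i, (c (i + 1)) ^ 2 ≤ (c i) ^ 2)
    (hsumα : Summable fun i => ((c i) ^ 2) ^ α)
    (hsum : Summable fun i => (c i) ^ 2)
    (K : ℕ) (hK : 1 ≤ K) :
    (∑' i, (c (K + i)) ^ 2) ≤
      (α / (1 - α)) * (K : ℝ) ^ (-(1 - α) / α) * (∑' i, ((c i) ^ 2) ^ α) ^ (1 / α) :=
  tail_le_entropy_bound_general α hα0 hα1 c hmono hsumα K hK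
end

section
/- Let m be a natural number, let A, B be m × m complex matrices with A * A = 1, and let θ be a real number. (i) If A * B = B * A, then exp((Complex.I * θ) • A) * B * exp((−Complex.I * θ) • A) = B. (ii) If A * B = −(B * A), then exp((Complex.I * θ) • A) * B * exp((−Complex.I * θ) • A) = (cos(2θ) : ℂ) • B − (Complex.I * sin(2θ)) • (B * A), which equals cos(2θ) • B + (Complex.I * sin(2θ)) • (A * B). (This is the closed-form conjugation rule for a Pauli rotation exp(−i w P τ) acting on a Pauli word, with θ = w τ.) -/
/-! Since `A² = 1`, the exponential series splits into even and odd parts,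
`exp (z • A) = cosh z • 1 + sinh z • A`. If `A` anticommutes with `B`, moving `B` across
`exp (x • A)` flips the sign of `x`, so the conjugate is `B * exp (-2x • A)`, which for
`x = iθ` is the stated closed form. -/

section Involution

variable {𝔸 : Type*} [Ring 𝔸] [Algebra ℂ 𝔸] [TopologicalSpace 𝔸] [IsTopologicalRing 𝔸]
  [ContinuousSMul ℂ 𝔸] [T2Space 𝔸] {A : 𝔸}

theorem exp_smul_eq_cosh_add_sinh_of_mul_self_eq_one (hA : A * A = 1) (z : ℂ) :
    NormedSpace.exp (z • A) = Complex.cosh z • 1 + Complex.sinh z • A := by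
  have hA2 : A ^ 2 = 1 := by rw [sq, hA]
  rw [NormedSpace.exp_eq_tsum ℂ]
  refine HasSum.tsum_eq (HasSum.even_add_odd ?_ ?_)
  · convert (Complex.hasSum_cosh z).smul_const (1 : 𝔸) using 2 with k
    rw [smul_pow, pow_mul A, hA2, one_pow, smul_smul, inv_mul_eq_div]
  · convert (Complex.hasSum_sinh z).smul_const A using 2 with k
    rw [smul_pow, pow_succ A, pow_mul A, hA2, one_pow, one_mul, smul_smul, inv_mul_eq_div]

theorem exp_smul_mul_exp_smul_of_mul_self_eq_one (hA : A * A = 1) (z w : ℂ) :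
    NormedSpace.exp (z • A) * NormedSpace.exp (w • A) = NormedSpace.exp ((z + w) • A) := by
  simp only [exp_smul_eq_cosh_add_sinh_of_mul_self_eq_one hA, Complex.cosh_add, Complex.sinh_add,
    add_mul, mul_add, smul_mul_smul, mul_one, one_mul, hA]
  module

theorem exp_smul_mul_eq_mul_exp_neg_smul (hA : A * A = 1) {B : 𝔸} (hAB : A * B = -(B * A))
    (z : ℂ) : NormedSpace.exp (z • A) * B = B * NormedSpace.exp ((-z) • A) := by
  rw [exp_smul_eq_cosh_add_sinh_of_mul_self_eq_one hA,
    exp_smul_eq_cosh_add_sinh_of_mul_self_eq_one hA]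
  simp only [add_mul, mul_add, smul_mul_assoc, mul_smul_comm, one_mul, mul_one, mul_neg, hAB,
    Complex.cosh_neg, Complex.sinh_neg, smul_neg, neg_smul]

end Involution

/-- Closed-form conjugation rule for a Pauli rotation `exp(i θ A)` acting on `B`,
where `A² = 1` and `A` either commutes or anticommutes with `B`. -/
theorem pauli_rotation_conjugation (m : ℕ) (A B : Matrix (Fin m) (Fin m) ℂ)
    (hA : A * A = 1) (θ : ℝ) :
    (A * B = B * A →
      NormedSpace.exp ((Complex.I * (θ : ℂ)) • A) * B *
          NormedSpace.exp ((-(Complex.I * (θ : ℂ))) • A) = B) ∧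
    (A * B = -(B * A) →
      NormedSpace.exp ((Complex.I * (θ : ℂ)) • A) * B *
          NormedSpace.exp ((-(Complex.I * (θ : ℂ))) • A) =
        ((Real.cos (2 * θ) : ℂ)) • B - (Complex.I * (Real.sin (2 * θ) : ℂ)) • (B * A) ∧
      NormedSpace.exp ((Complex.I * (θ : ℂ)) • A) * B *
          NormedSpace.exp ((-(Complex.I * (θ : ℂ))) • A) =
        ((Real.cos (2 * θ) : ℂ)) • B + (Complex.I * (Real.sin (2 * θ) : ℂ)) • (A * B)) := by
  set x : ℂ := Complex.I * θ
  refine ⟨fun hAB => ?_, fun hAB => ?_⟩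
  · have hcomm : Commute (NormedSpace.exp (x • A)) B :=
      ((show Commute A B from hAB).smul_left x).exp_left
    rw [hcomm.eq, mul_assoc, exp_smul_mul_exp_smul_of_mul_self_eq_one hA, add_neg_cancel,
      zero_smul, NormedSpace.exp_zero, mul_one]
  · have hconj : NormedSpace.exp (x • A) * B * NormedSpace.exp ((-x) • A) =
        (Real.cos (2 * θ) : ℂ) • B - (Complex.I * (Real.sin (2 * θ) : ℂ)) • (B * A) := by
      rw [exp_smul_mul_eq_mul_exp_neg_smul hA hAB, mul_assoc,
        exp_smul_mul_exp_smul_of_mul_self_eq_one hA,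
        exp_smul_eq_cosh_add_sinh_of_mul_self_eq_one hA,
        show -x + -x = -((2 * θ : ℝ) * Complex.I) by push_cast; ring, Complex.cosh_neg,
        Complex.sinh_neg, Complex.cosh_mul_I, Complex.sinh_mul_I, ← Complex.ofReal_cos,
        ← Complex.ofReal_sin]
      simp only [mul_add, mul_smul_comm, mul_one, mul_neg, neg_smul, sub_eq_add_neg,
        mul_comm Complex.I]
    refine ⟨hconj, ?_⟩
    rw [hconj, hAB, smul_neg, sub_eq_add_neg]
end
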